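/- arXiv:2504.20470 — 2 statements merged into one kernel-verified Lean document; each statement's English description precedes it below -/
import Mathlib

section
/- Identifiability of the control-arm principal-stratum outcome distribution (Theorem 3(b)): Suppose two models (Ω, ℱ, μ, G, A, S⁰, S¹, Y⁰, Y¹) and (Ω', ℱ', μ', G', A', S'⁰, S'¹, Y'⁰, Y'¹) each satisfy Assumption 5, Assumption 7, Assumption 8, and Condition 4(ii), and have the same observed data distribution, i.e. μ(G=g, A=a, S=s, Y=y) = μ'(G'=g, A'=a, S'=s, Y'=y) for all g ∈ Fin m and a, s, y ∈ {0,1}. Then for all (a,b) ∈ {(0,0),(0,1),(1,1)} and every g such that μ(S⁰=a, S¹=b, G=g) > 0 and μ'(S'⁰=a, S'¹=b, G'=g) > 0: P(Y⁰=1 | S⁰=a, S¹=b, G=g) = P'(Y'⁰=1 | S'⁰=a, S'¹=b, G'=g). -/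
/-!
Condition on a trial `g`. Randomization makes the law of the potential pair `(Sᵃ, Yᵃ)` equal to
the observed law of `(S, Y)` in arm `a`, so within every trial the laws of `(S⁰, Y⁰)` and
`(S¹, Y¹)` are identified. Under monotonicity the strata are read off these marginals:
`P(1,1) = P(S⁰ = 1)`, `P(0,0) = P(S¹ = 0)`, `P(0,1) = P(S¹ = 1) - P(S⁰ = 1)`, and
`P(Y⁰ = 1 | 1,1) = P(Y⁰ = 1 | S⁰ = 1)`. In the strata `(0,1)` and `(0,0)`, Assumption 7 makes the
control means `p₀₁, p₀₀` common to all trials, and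
`P(S⁰ = 0, Y⁰ = 1 | g) = p₀₁ P(0,1 | g) + p₀₀ P(0,0 | g)` for every `g`: a linear system whose
identified matrix is that of Condition 4(ii), so full column rank pins down `(p₀₁, p₀₀)`.
-/

open MeasureTheory ProbabilityTheory

noncomputable def condP {Ω : Type*} [MeasurableSpace Ω] (μ : Measure Ω) (E F : Set Ω) : ℝ :=
  (μ (E ∩ F)).toReal / (μ F).toReal

lemma setOf_and_and_eq_inter {Ω : Type*} (p q r : Ω → Prop) :
    {ω | p ω ∧ q ω ∧ r ω} = {ω | r ω} ∩ {ω | p ω ∧ q ω} :=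
  Set.ext fun _ => ⟨fun ⟨hp, hq, hr⟩ => ⟨hr, hp, hq⟩, fun ⟨hr, hp, hq⟩ => ⟨hp, hq, hr⟩⟩

lemma Matrix.mulVec_injective_of_rank_eq_card {m n K : Type*} [Fintype m] [Fintype n]
    [DecidableEq n] [Field K] {M : Matrix m n K} (h : M.rank = Fintype.card n) :
    Function.Injective M.mulVec := by
  have hker := LinearMap.finrank_range_add_finrank_ker M.mulVecLin
  rw [← Matrix.rank, h, Module.finrank_fintype_fun_eq_card, add_eq_left,
    Submodule.finrank_eq_zero, LinearMap.ker_eq_bot] at hker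
  exact hker

section Measure

variable {Ω Ω' β γ : Type*} [MeasurableSpace Ω] [MeasurableSpace Ω'] [MeasurableSpace β]
  [MeasurableSpace γ] {μ : Measure Ω} {μ' : Measure Ω'}

lemma condP_eq_cond_measureReal {E F : Set Ω} (hF : MeasurableSet F) :
    condP μ E F = (μ[|F]).real E := by
  rw [condP, measureReal_def, cond_apply hF, ENNReal.toReal_mul, ENNReal.toReal_inv,
    Set.inter_comm, div_eq_inv_mul]

lemma condP_cond [IsFiniteMeasure μ] {E F H : Set Ω} (hH : MeasurableSet H) (hμH : μ H ≠ 0) :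
    condP (μ[|H]) E F = condP μ E (H ∩ F) := by
  have hc : ((μ H)⁻¹).toReal ≠ 0 :=
    ENNReal.toReal_ne_zero.2 ⟨ENNReal.inv_ne_zero.2 (measure_ne_top μ H), ENNReal.inv_ne_top.2 hμH⟩
  rw [condP, condP, cond_apply hH, cond_apply hH, ENNReal.toReal_mul, ENNReal.toReal_mul,
    mul_div_mul_left _ _ hc, Set.inter_left_comm]

lemma condP_congr_ae {E F F' : Set Ω} (h : F =ᵐ[μ] F') : condP μ E F = condP μ E F' := by
  rw [condP, condP, measure_congr h, measure_congr ((ae_eq_refl E).inter h)]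

lemma measureReal_inter_eq_mul_of_condP_eq [IsFiniteMeasure μ] {E F : Set Ω} {p : ℝ}
    (h : 0 < μ F → condP μ E F = p) : μ.real (E ∩ F) = p * μ.real F := by
  rcases eq_zero_or_pos (μ F) with hF | hF
  · rw [measureReal_def, measure_mono_null Set.inter_subset_right hF, measureReal_def, hF]
    simp
  · rw [← h hF, condP, measureReal_def, measureReal_def, div_mul_cancel₀]
    exact ENNReal.toReal_ne_zero.2 ⟨hF.ne', measure_ne_top μ F⟩

lemma measureReal_eq_inter_true_add_inter_false [IsFiniteMeasure μ] {Z : Ω → Bool}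
    (hZ : Measurable Z) (s : Set Ω) :
    μ.real s = μ.real (s ∩ {ω | Z ω = true}) + μ.real (s ∩ {ω | Z ω = false}) := by
  rw [← measureReal_inter_add_sdiff (s := s) (hZ (measurableSet_singleton true))]
  congr 2
  ext ω
  simp

lemma measurable_of_forall_eq_bif {f g h k : Ω → Bool}
    (hk : ∀ ω, k ω = bif f ω then g ω else h ω) (hf : Measurable f) (hg : Measurable g)
    (hh : Measurable h) : Measurable k := by
  rw [funext hk]
  exact (measurable_of_countable fun p : Bool × Bool × Bool => bif p.1 then p.2.1 else p.2.2).comp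
    (hf.prodMk (hg.prodMk hh))

lemma indepFun_of_measureReal_inter_preimage_singleton [IsFiniteMeasure μ] [Countable β]
    [Countable γ] [MeasurableSingletonClass β] [MeasurableSingletonClass γ]
    {X : Ω → β} {Z : Ω → γ} (hX : Measurable X) (hZ : Measurable Z)
    (h : ∀ b c, μ.real (X ⁻¹' {b} ∩ Z ⁻¹' {c}) = μ.real (X ⁻¹' {b}) * μ.real (Z ⁻¹' {c})) :
    IndepFun X Z μ := by
  rw [indepFun_iff_map_prod_eq_prod_map_map hX.aemeasurable hZ.aemeasurable]
  refine Measure.ext_of_singleton fun ⟨b, c⟩ => ?_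
  rw [← Set.singleton_prod_singleton, Measure.prod_prod,
    Measure.map_apply (hX.prodMk hZ) ((measurableSet_singleton b).prod (measurableSet_singleton c)),
    Set.mk_preimage_prod, Measure.map_apply hX (measurableSet_singleton b),
    Measure.map_apply hZ (measurableSet_singleton c),
    ← ENNReal.toReal_eq_toReal_iff' (by finiteness) (by finiteness), ENNReal.toReal_mul]
  exact h b c

lemma map_eq_of_measure_preimage_singleton_eq [Countable β] [MeasurableSingletonClass β]
    {X : Ω → β} {X' : Ω' → β} (hX : Measurable X) (hX' : Measurable X')
    (h : ∀ x, μ (X ⁻¹' {x}) = μ' (X' ⁻¹' {x})) : μ.map X = μ'.map X' :=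
  Measure.ext_of_singleton fun x => by
    rw [Measure.map_apply hX (measurableSet_singleton x),
      Measure.map_apply hX' (measurableSet_singleton x), h]

lemma measure_preimage_eq_of_map_eq {X : Ω → β} {X' : Ω' → β} (hX : Measurable X)
    (hX' : Measurable X') (h : μ.map X = μ'.map X') {T : Set β} (hT : MeasurableSet T) :
    μ (X ⁻¹' T) = μ' (X' ⁻¹' T) := by
  rw [← Measure.map_apply hX hT, h, Measure.map_apply hX' hT]

lemma measureReal_preimage_eq_of_map_eq {X : Ω → β} {X' : Ω' → β} (hX : Measurable X)
    (hX' : Measurable X') (h : μ.map X = μ'.map X') {T : Set β} (hT : MeasurableSet T) :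
    μ.real (X ⁻¹' T) = μ'.real (X' ⁻¹' T) := by
  rw [measureReal_def, measureReal_def, measure_preimage_eq_of_map_eq hX hX' h hT]

lemma condP_preimage_eq_of_map_eq {X : Ω → β} {X' : Ω' → β} (hX : Measurable X)
    (hX' : Measurable X') (h : μ.map X = μ'.map X') {T U : Set β} (hT : MeasurableSet T)
    (hU : MeasurableSet U) :
    condP μ (X ⁻¹' T) (X ⁻¹' U) = condP μ' (X' ⁻¹' T) (X' ⁻¹' U) := by
  rw [condP, condP, ← Set.preimage_inter, measure_preimage_eq_of_map_eq hX hX' h (hT.inter hU),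
    measure_preimage_eq_of_map_eq hX hX' h hU, Set.preimage_inter]

lemma cond_map_eq_of_map_prod_eq {X : Ω → β} {Z : Ω → γ} {X' : Ω' → β} {Z' : Ω' → γ}
    (hX : Measurable X) (hZ : Measurable Z) (hX' : Measurable X') (hZ' : Measurable Z')
    (h : μ.map (fun ω => (X ω, Z ω)) = μ'.map (fun ω => (X' ω, Z' ω)))
    {s : Set β} (hs : MeasurableSet s) :
    (μ[|X ⁻¹' s]).map Z = (μ'[|X' ⁻¹' s]).map Z' := by
  have key : ∀ t, MeasurableSet t → μ (X ⁻¹' s ∩ Z ⁻¹' t) = μ' (X' ⁻¹' s ∩ Z' ⁻¹' t) :=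
    fun t ht => by
      simpa only [Set.mk_preimage_prod] using
        measure_preimage_eq_of_map_eq (hX.prodMk hZ) (hX'.prodMk hZ') h (hs.prod ht)
  ext t ht
  rw [Measure.map_apply hZ ht, Measure.map_apply hZ' ht, cond_apply (hX hs), cond_apply (hX' hs),
    key t ht]
  simpa using congrArg (·⁻¹ * μ' (X' ⁻¹' s ∩ Z' ⁻¹' t)) (key Set.univ MeasurableSet.univ)

end Measure

section Monotone

variable {Ω : Type*} [MeasurableSpace Ω] {P : Measure Ω} {S0 S1 : Ω → Bool}

lemma setOf_eq_true_ae_eq_of_ae_le (h : ∀ᵐ ω ∂P, S0 ω ≤ S1 ω) :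
    {ω | S0 ω = true} =ᵐ[P] {ω | S0 ω = true ∧ S1 ω = true} := by
  refine Filter.eventuallyEq_set.2 (h.mono fun ω hω => ?_)
  revert hω
  simp only [Set.mem_ofPred_eq]
  cases S0 ω <;> cases S1 ω <;> decide

lemma setOf_eq_false_ae_eq_of_ae_le (h : ∀ᵐ ω ∂P, S0 ω ≤ S1 ω) :
    {ω | S1 ω = false} =ᵐ[P] {ω | S0 ω = false ∧ S1 ω = false} := by
  refine Filter.eventuallyEq_set.2 (h.mono fun ω hω => ?_)
  revert hω
  simp only [Set.mem_ofPred_eq]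
  cases S0 ω <;> cases S1 ω <;> decide

lemma measureReal_false_true_eq_sub_of_ae_le [IsFiniteMeasure P] (hS0 : Measurable S0)
    (h : ∀ᵐ ω ∂P, S0 ω ≤ S1 ω) :
    P.real {ω | S0 ω = false ∧ S1 ω = true} =
      P.real {ω | S1 ω = true} - P.real {ω | S0 ω = true} := by
  have htrue : {ω | S1 ω = true} ∩ {ω | S0 ω = true} = {ω | S0 ω = true ∧ S1 ω = true} :=
    Set.ext fun ω => and_comm
  have hfalse : {ω | S1 ω = true} ∩ {ω | S0 ω = false} = {ω | S0 ω = false ∧ S1 ω = true} :=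
    Set.ext fun ω => and_comm
  rw [measureReal_eq_inter_true_add_inter_false hS0 {ω | S1 ω = true}, htrue, hfalse,
    ← measureReal_congr (setOf_eq_true_ae_eq_of_ae_le h)]
  ring

end Monotone

section Trial

variable {Ω Ω' : Type*} [MeasurableSpace Ω] [MeasurableSpace Ω'] {P : Measure Ω}
  {P' : Measure Ω'} {A S0 S1 Y0 Y1 S Y : Ω → Bool} {A' S0' S1' Y0' Y1' S' Y' : Ω' → Bool}

/-- Assumptions 5 and 8 of the paper, for a single trial with law `P`. -/
structure IsMonotoneRandomizedTrial (P : Measure Ω) (A S0 S1 Y0 Y1 : Ω → Bool) : Prop where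
  indepFun : IndepFun A (fun ω => (S0 ω, S1 ω, Y0 ω, Y1 ω)) P
  overlap : ∀ a, P (A ⁻¹' {a}) ≠ 0
  monotone : ∀ᵐ ω ∂P, S0 ω ≤ S1 ω

lemma IsMonotoneRandomizedTrial.map_potential_eq_cond_map [IsFiniteMeasure P]
    (h : IsMonotoneRandomizedTrial P A S0 S1 Y0 Y1) (hA : Measurable A) (hS0 : Measurable S0)
    (hS1 : Measurable S1) (hY0 : Measurable Y0) (hY1 : Measurable Y1)
    (hSY : Measurable fun ω => (S ω, Y ω))
    (hS : ∀ ω, S ω = bif A ω then S1 ω else S0 ω) (hY : ∀ ω, Y ω = bif A ω then Y1 ω else Y0 ω)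
    (a : Bool) :
    P.map (fun ω => (bif a then S1 ω else S0 ω, bif a then Y1 ω else Y0 ω)) =
      (P[|A ⁻¹' {a}]).map fun ω => (S ω, Y ω) := by
  ext T hT
  have hφ : Measurable fun v : Bool × Bool × Bool × Bool =>
      (bif a then v.2.1 else v.1, bif a then v.2.2.2 else v.2.2.1) :=
    measurable_of_countable _
  have hW : Measurable fun ω => (bif a then S1 ω else S0 ω, bif a then Y1 ω else Y0 ω) :=
    hφ.comp (hS0.prodMk (hS1.prodMk (hY0.prodMk hY1)))
  have hind : IndepFun A (fun ω => (bif a then S1 ω else S0 ω, bif a then Y1 ω else Y0 ω)) P :=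
    h.indepFun.comp measurable_id hφ
  have hobs : A ⁻¹' {a} ∩ (fun ω => (S ω, Y ω)) ⁻¹' T =
      A ⁻¹' {a} ∩ (fun ω => (bif a then S1 ω else S0 ω, bif a then Y1 ω else Y0 ω)) ⁻¹' T := by
    ext ω
    simp only [Set.mem_inter_iff, Set.mem_preimage, Set.mem_singleton_iff, hS, hY]
    exact and_congr_right fun ha => by rw [ha]
  rw [Measure.map_apply hW hT, Measure.map_apply hSY hT,
    cond_apply (hA (measurableSet_singleton a)), hobs,
    hind.measure_inter_preimage_eq_mul _ _ (measurableSet_singleton a) hT, ← mul_assoc,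
    ENNReal.inv_mul_cancel (h.overlap a) (measure_ne_top _ _), one_mul]

lemma IsMonotoneRandomizedTrial.map_potential_eq [IsFiniteMeasure P] [IsFiniteMeasure P']
    (h : IsMonotoneRandomizedTrial P A S0 S1 Y0 Y1)
    (h' : IsMonotoneRandomizedTrial P' A' S0' S1' Y0' Y1')
    (hA : Measurable A) (hS0 : Measurable S0) (hS1 : Measurable S1) (hY0 : Measurable Y0)
    (hY1 : Measurable Y1) (hSY : Measurable fun ω => (S ω, Y ω))
    (hA' : Measurable A') (hS0' : Measurable S0') (hS1' : Measurable S1') (hY0' : Measurable Y0')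
    (hY1' : Measurable Y1') (hSY' : Measurable fun ω => (S' ω, Y' ω))
    (hS : ∀ ω, S ω = bif A ω then S1 ω else S0 ω) (hY : ∀ ω, Y ω = bif A ω then Y1 ω else Y0 ω)
    (hS' : ∀ ω, S' ω = bif A' ω then S1' ω else S0' ω)
    (hY' : ∀ ω, Y' ω = bif A' ω then Y1' ω else Y0' ω)
    (hobs : P.map (fun ω => (A ω, S ω, Y ω)) = P'.map fun ω => (A' ω, S' ω, Y' ω)) (a : Bool) :
    P.map (fun ω => (bif a then S1 ω else S0 ω, bif a then Y1 ω else Y0 ω)) =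
      P'.map fun ω => (bif a then S1' ω else S0' ω, bif a then Y1' ω else Y0' ω) := by
  rw [h.map_potential_eq_cond_map hA hS0 hS1 hY0 hY1 hSY hS hY a,
    h'.map_potential_eq_cond_map hA' hS0' hS1' hY0' hY1' hSY' hS' hY' a]
  exact cond_map_eq_of_map_prod_eq hA hSY hA' hSY' hobs (measurableSet_singleton a)

lemma measureReal_stratum_eq_of_map_eq [IsFiniteMeasure P] [IsFiniteMeasure P']
    (hS0 : Measurable S0) (hS1 : Measurable S1) (hY0 : Measurable Y0) (hY1 : Measurable Y1)
    (hS0' : Measurable S0') (hS1' : Measurable S1') (hY0' : Measurable Y0')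
    (hY1' : Measurable Y1') (hm : ∀ᵐ ω ∂P, S0 ω ≤ S1 ω) (hm' : ∀ᵐ ω ∂P', S0' ω ≤ S1' ω)
    (h0 : P.map (fun ω => (S0 ω, Y0 ω)) = P'.map fun ω => (S0' ω, Y0' ω))
    (h1 : P.map (fun ω => (S1 ω, Y1 ω)) = P'.map fun ω => (S1' ω, Y1' ω)) (c : Bool) :
    P.real {ω | S0 ω = false ∧ S1 ω = c} = P'.real {ω | S0' ω = false ∧ S1' ω = c} := by
  have e0 (s : Bool) : P.real {ω | S0 ω = s} = P'.real {ω | S0' ω = s} :=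
    measureReal_preimage_eq_of_map_eq (hS0.prodMk hY0) (hS0'.prodMk hY0') h0
      (T := {x | x.1 = s}) .of_discrete
  have e1 (s : Bool) : P.real {ω | S1 ω = s} = P'.real {ω | S1' ω = s} :=
    measureReal_preimage_eq_of_map_eq (hS1.prodMk hY1) (hS1'.prodMk hY1') h1
      (T := {x | x.1 = s}) .of_discrete
  cases c
  · rw [← measureReal_congr (setOf_eq_false_ae_eq_of_ae_le hm),
      ← measureReal_congr (setOf_eq_false_ae_eq_of_ae_le hm'), e1]
  · rw [measureReal_false_true_eq_sub_of_ae_le hS0 hm,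
      measureReal_false_true_eq_sub_of_ae_le hS0' hm', e0, e1]

lemma condP_stratum_true_true_eq_of_map_eq (hS0 : Measurable S0) (hY0 : Measurable Y0)
    (hS0' : Measurable S0') (hY0' : Measurable Y0') (hm : ∀ᵐ ω ∂P, S0 ω ≤ S1 ω)
    (hm' : ∀ᵐ ω ∂P', S0' ω ≤ S1' ω)
    (h0 : P.map (fun ω => (S0 ω, Y0 ω)) = P'.map fun ω => (S0' ω, Y0' ω)) :
    condP P {ω | Y0 ω = true} {ω | S0 ω = true ∧ S1 ω = true} =
      condP P' {ω | Y0' ω = true} {ω | S0' ω = true ∧ S1' ω = true} := by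
  rw [← condP_congr_ae (setOf_eq_true_ae_eq_of_ae_le hm),
    ← condP_congr_ae (setOf_eq_true_ae_eq_of_ae_le hm')]
  exact condP_preimage_eq_of_map_eq (hS0.prodMk hY0) (hS0'.prodMk hY0') h0
    (T := {x | x.2 = true}) (U := {x | x.1 = true}) .of_discrete .of_discrete

end Trial

section Model

variable {Ω : Type*} [MeasurableSpace Ω] {μ : Measure Ω} {m : ℕ} {G : Ω → Fin m}
  {A S0 S1 Y0 Y1 : Ω → Bool}

lemma isMonotoneRandomizedTrial_cond [IsProbabilityMeasure μ] (hG : Measurable G)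
    (hA : Measurable A) (hS0 : Measurable S0) (hS1 : Measurable S1) (hY0 : Measurable Y0)
    (hY1 : Measurable Y1) {g : Fin m} (hpos : 0 < μ {ω | G ω = g})
    (hov : 0 < condP μ {ω | A ω = true} {ω | G ω = g} ∧
      condP μ {ω | A ω = true} {ω | G ω = g} < 1)
    (hind : ∀ a s0 s1 y0 y1 : Bool,
      condP μ {ω | A ω = a ∧ S0 ω = s0 ∧ S1 ω = s1 ∧ Y0 ω = y0 ∧ Y1 ω = y1} {ω | G ω = g} =
        condP μ {ω | A ω = a} {ω | G ω = g} *
          condP μ {ω | S0 ω = s0 ∧ S1 ω = s1 ∧ Y0 ω = y0 ∧ Y1 ω = y1} {ω | G ω = g})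
    (hmono : μ {ω | S0 ω ≤ S1 ω} = 1) :
    IsMonotoneRandomizedTrial (μ[|{ω | G ω = g}]) A S0 S1 Y0 Y1 := by
  have hGg : MeasurableSet {ω | G ω = g} := hG (measurableSet_singleton g)
  have := cond_isProbabilityMeasure (μ := μ) hpos.ne'
  simp only [condP_eq_cond_measureReal hGg] at hov hind
  refine ⟨?_, fun a => ?_, ?_⟩
  · refine indepFun_of_measureReal_inter_preimage_singleton hA
      (hS0.prodMk (hS1.prodMk (hY0.prodMk hY1))) fun a ⟨s0, s1, y0, y1⟩ => ?_
    have hV : (fun ω => (S0 ω, S1 ω, Y0 ω, Y1 ω)) ⁻¹' {(s0, s1, y0, y1)} =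
        {ω | S0 ω = s0 ∧ S1 ω = s1 ∧ Y0 ω = y0 ∧ Y1 ω = y1} := by
      ext ω
      simp
    rw [hV]
    exact hind a s0 s1 y0 y1
  · have hA1 : MeasurableSet {ω | A ω = true} := hA (measurableSet_singleton true)
    cases a
    · have hA0 : A ⁻¹' {false} = {ω | A ω = true}ᶜ := by
        ext ω
        simp
      rw [hA0]
      refine (measureReal_ne_zero_iff).1 ?_
      rw [probReal_compl_eq_one_sub hA1]
      linarith [hov.2]
    · exact (measureReal_ne_zero_iff).1 hov.1.ne'
  · have hle : MeasurableSet {ω | S0 ω ≤ S1 ω} :=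
      (hS0.prodMk hS1) (MeasurableSet.of_discrete (s := {p : Bool × Bool | p.1 ≤ p.2}))
    exact cond_absolutelyContinuous.ae_le
      ((ae_iff_measure_eq hle.nullMeasurableSet).2 (by rw [hmono, measure_univ]))

/-- The matrix of Condition 4(ii): column `0` is the stratum `(S⁰, S¹) = (0, 1)`, column `1` the
stratum `(0, 0)`. -/
noncomputable def strataMatrix (μ : Measure Ω) (G : Ω → Fin m) (S0 S1 : Ω → Bool) :
    Matrix (Fin m) (Fin 2) ℝ :=
  Matrix.of fun g j => condP μ {ω | S0 ω = false ∧ S1 ω = (j = 0 : Bool)} {ω | G ω = g}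

noncomputable def controlStrataMean (μ : Measure Ω) (S0 S1 Y0 : Ω → Bool) : Fin 2 → ℝ :=
  fun j => condP μ {ω | Y0 ω = true} {ω | S0 ω = false ∧ S1 ω = (j = 0 : Bool)}

lemma strataMatrix_mulVec_controlStrataMean [IsFiniteMeasure μ] (hG : Measurable G)
    (hS1 : Measurable S1) (hpos : ∀ g, μ {ω | G ω = g} ≠ 0)
    (h7 : ∀ c g, 0 < μ {ω | S0 ω = false ∧ S1 ω = c ∧ G ω = g} →
      condP μ {ω | Y0 ω = true} {ω | S0 ω = false ∧ S1 ω = c ∧ G ω = g} =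
        condP μ {ω | Y0 ω = true} {ω | S0 ω = false ∧ S1 ω = c}) :
    (strataMatrix μ G S0 S1).mulVec (controlStrataMean μ S0 S1 Y0) =
      fun g => (μ[|{ω | G ω = g}]).real {ω | S0 ω = false ∧ Y0 ω = true} := by
  funext g
  have hGg : MeasurableSet {ω | G ω = g} := hG (measurableSet_singleton g)
  have hstratum (c : Bool) : {ω | G ω = g} ∩ {ω | S0 ω = false ∧ S1 ω = c} =
      {ω | S0 ω = false ∧ S1 ω = c ∧ G ω = g} :=
    (setOf_and_and_eq_inter _ _ _).symm
  have hrow (c : Bool) :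
      (μ[|{ω | G ω = g}]).real ({ω | Y0 ω = true} ∩ {ω | S0 ω = false ∧ S1 ω = c}) =
        condP μ {ω | Y0 ω = true} {ω | S0 ω = false ∧ S1 ω = c} *
          (μ[|{ω | G ω = g}]).real {ω | S0 ω = false ∧ S1 ω = c} :=
    measureReal_inter_eq_mul_of_condP_eq fun hc => by
      rw [condP_cond hGg (hpos g), hstratum]
      exact h7 c g (hstratum c ▸ inter_pos_of_cond_ne_zero hGg hc.ne')
  have hsplit : (μ[|{ω | G ω = g}]).real {ω | S0 ω = false ∧ Y0 ω = true} =
      (μ[|{ω | G ω = g}]).real ({ω | Y0 ω = true} ∩ {ω | S0 ω = false ∧ S1 ω = true}) +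
        (μ[|{ω | G ω = g}]).real ({ω | Y0 ω = true} ∩ {ω | S0 ω = false ∧ S1 ω = false}) := by
    rw [measureReal_eq_inter_true_add_inter_false hS1]
    congr 2 <;> ext ω <;> simp only [Set.mem_inter_iff, Set.mem_ofPred_eq] <;> tauto
  simp only [Matrix.mulVec, dotProduct, Fin.sum_univ_two, strataMatrix, controlStrataMean,
    Matrix.of_apply, condP_eq_cond_measureReal hGg]
  rw [hsplit, hrow, hrow]
  simp only [decide_true, Fin.one_eq_zero_iff, OfNat.ofNat_ne_one, decide_false]
  ring

end Model

section Identification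

variable {Ω Ω' : Type*} [MeasurableSpace Ω] [MeasurableSpace Ω'] {μ : Measure Ω}
  {μ' : Measure Ω'} {m : ℕ} {G : Ω → Fin m} {A S0 S1 Y0 Y1 S Y : Ω → Bool}
  {G' : Ω' → Fin m} {A' S0' S1' Y0' Y1' S' Y' : Ω' → Bool}

lemma map_potential_cond_eq
    (hT : ∀ g, IsMonotoneRandomizedTrial (μ[|{ω | G ω = g}]) A S0 S1 Y0 Y1)
    (hT' : ∀ g, IsMonotoneRandomizedTrial (μ'[|{ω | G' ω = g}]) A' S0' S1' Y0' Y1')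
    (hG : Measurable G) (hA : Measurable A) (hS0 : Measurable S0) (hS1 : Measurable S1)
    (hY0 : Measurable Y0) (hY1 : Measurable Y1) (hSY : Measurable fun ω => (S ω, Y ω))
    (hG' : Measurable G') (hA' : Measurable A') (hS0' : Measurable S0') (hS1' : Measurable S1')
    (hY0' : Measurable Y0') (hY1' : Measurable Y1') (hSY' : Measurable fun ω => (S' ω, Y' ω))
    (hS : ∀ ω, S ω = bif A ω then S1 ω else S0 ω) (hY : ∀ ω, Y ω = bif A ω then Y1 ω else Y0 ω)
    (hS' : ∀ ω, S' ω = bif A' ω then S1' ω else S0' ω)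
    (hY' : ∀ ω, Y' ω = bif A' ω then Y1' ω else Y0' ω)
    (hobs : ∀ g a s y, μ {ω | G ω = g ∧ A ω = a ∧ S ω = s ∧ Y ω = y} =
      μ' {ω | G' ω = g ∧ A' ω = a ∧ S' ω = s ∧ Y' ω = y}) (g : Fin m) :
    (μ[|{ω | G ω = g}]).map (fun ω => (S0 ω, Y0 ω)) =
        (μ'[|{ω | G' ω = g}]).map (fun ω => (S0' ω, Y0' ω)) ∧
      (μ[|{ω | G ω = g}]).map (fun ω => (S1 ω, Y1 ω)) =
        (μ'[|{ω | G' ω = g}]).map (fun ω => (S1' ω, Y1' ω)) := by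
  have hjoint := map_eq_of_measure_preimage_singleton_eq (hG.prodMk (hA.prodMk hSY))
    (hG'.prodMk (hA'.prodMk hSY')) fun ⟨g, a, s, y⟩ => by
      simpa only [Set.preimage, Set.mem_singleton_iff, Prod.mk.injEq] using hobs g a s y
  have hpot := (hT g).map_potential_eq (hT' g) hA hS0 hS1 hY0 hY1 hSY hA' hS0' hS1' hY0' hY1'
    hSY' hS hY hS' hY' (cond_map_eq_of_map_prod_eq hG (hA.prodMk hSY) hG' (hA'.prodMk hSY') hjoint
      (measurableSet_singleton g))
  exact ⟨by simpa using hpot false, by simpa using hpot true⟩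

lemma controlStrataMean_eq [IsFiniteMeasure μ] [IsFiniteMeasure μ']
    (hrank : (strataMatrix μ G S0 S1).rank = 2)
    (hG : Measurable G) (hS0 : Measurable S0) (hS1 : Measurable S1) (hY0 : Measurable Y0)
    (hY1 : Measurable Y1) (hG' : Measurable G') (hS0' : Measurable S0') (hS1' : Measurable S1')
    (hY0' : Measurable Y0') (hY1' : Measurable Y1')
    (hpos : ∀ g, μ {ω | G ω = g} ≠ 0) (hpos' : ∀ g, μ' {ω | G' ω = g} ≠ 0)
    (h7 : ∀ c g, 0 < μ {ω | S0 ω = false ∧ S1 ω = c ∧ G ω = g} →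
      condP μ {ω | Y0 ω = true} {ω | S0 ω = false ∧ S1 ω = c ∧ G ω = g} =
        condP μ {ω | Y0 ω = true} {ω | S0 ω = false ∧ S1 ω = c})
    (h7' : ∀ c g, 0 < μ' {ω | S0' ω = false ∧ S1' ω = c ∧ G' ω = g} →
      condP μ' {ω | Y0' ω = true} {ω | S0' ω = false ∧ S1' ω = c ∧ G' ω = g} =
        condP μ' {ω | Y0' ω = true} {ω | S0' ω = false ∧ S1' ω = c})
    (hm : ∀ g, ∀ᵐ ω ∂μ[|{ω | G ω = g}], S0 ω ≤ S1 ω)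
    (hm' : ∀ g, ∀ᵐ ω ∂μ'[|{ω | G' ω = g}], S0' ω ≤ S1' ω)
    (h0 : ∀ g, (μ[|{ω | G ω = g}]).map (fun ω => (S0 ω, Y0 ω)) =
      (μ'[|{ω | G' ω = g}]).map (fun ω => (S0' ω, Y0' ω)))
    (h1 : ∀ g, (μ[|{ω | G ω = g}]).map (fun ω => (S1 ω, Y1 ω)) =
      (μ'[|{ω | G' ω = g}]).map (fun ω => (S1' ω, Y1' ω))) :
    controlStrataMean μ S0 S1 Y0 = controlStrataMean μ' S0' S1' Y0' := by
  have hM : strataMatrix μ G S0 S1 = strataMatrix μ' G' S0' S1' := Matrix.ext fun g j => by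
    rw [strataMatrix, strataMatrix, Matrix.of_apply, Matrix.of_apply,
      condP_eq_cond_measureReal (F := {ω | G ω = g}) (hG (measurableSet_singleton g)),
      condP_eq_cond_measureReal (F := {ω | G' ω = g}) (hG' (measurableSet_singleton g))]
    exact measureReal_stratum_eq_of_map_eq hS0 hS1 hY0 hY1 hS0' hS1' hY0' hY1' (hm g) (hm' g)
      (h0 g) (h1 g) _
  have hr (g : Fin m) : (μ[|{ω | G ω = g}]).real {ω | S0 ω = false ∧ Y0 ω = true} =
      (μ'[|{ω | G' ω = g}]).real {ω | S0' ω = false ∧ Y0' ω = true} :=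
    measureReal_preimage_eq_of_map_eq (hS0.prodMk hY0) (hS0'.prodMk hY0') (h0 g)
      (T := {x | x.1 = false ∧ x.2 = true}) .of_discrete
  refine Matrix.mulVec_injective_of_rank_eq_card (hrank.trans (Fintype.card_fin 2).symm) ?_
  rw [strataMatrix_mulVec_controlStrataMean hG hS1 hpos h7, hM,
    strataMatrix_mulVec_controlStrataMean hG' hS1' hpos' h7', funext hr]

end Identification

theorem stmt8_general
    {Ω Ω' : Type*} [MeasurableSpace Ω] [MeasurableSpace Ω']
    (μ : Measure Ω) (μ' : Measure Ω')
    [IsProbabilityMeasure μ] [IsProbabilityMeasure μ']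
    {m : ℕ}
    (G : Ω → Fin m) (A S0 S1 Y0 Y1 S Y : Ω → Bool)
    (G' : Ω' → Fin m) (A' S0' S1' Y0' Y1' S' Y' : Ω' → Bool)
    (hGmeas : Measurable G) (hAmeas : Measurable A)
    (hS0meas : Measurable S0) (hS1meas : Measurable S1)
    (hY0meas : Measurable Y0) (hY1meas : Measurable Y1)
    (hG'meas : Measurable G') (hA'meas : Measurable A')
    (hS0'meas : Measurable S0') (hS1'meas : Measurable S1')
    (hY0'meas : Measurable Y0') (hY1'meas : Measurable Y1')
    (hSdef : ∀ ω, S ω = bif A ω then S1 ω else S0 ω)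
    (hYdef : ∀ ω, Y ω = bif A ω then Y1 ω else Y0 ω)
    (hS'def : ∀ ω, S' ω = bif A' ω then S1' ω else S0' ω)
    (hY'def : ∀ ω, Y' ω = bif A' ω then Y1' ω else Y0' ω)
    -- Assumption 5 for μ
    (hA5pos : ∀ g : Fin m, 0 < μ {ω | G ω = g})
    (hA5ov : ∀ g : Fin m, 0 < condP μ {ω | A ω = true} {ω | G ω = g} ∧
        condP μ {ω | A ω = true} {ω | G ω = g} < 1)
    (hA5ind : ∀ (g : Fin m) (a s0 s1 y0 y1 : Bool),
      condP μ {ω | A ω = a ∧ S0 ω = s0 ∧ S1 ω = s1 ∧ Y0 ω = y0 ∧ Y1 ω = y1} {ω | G ω = g} =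
        condP μ {ω | A ω = a} {ω | G ω = g} *
          condP μ {ω | S0 ω = s0 ∧ S1 ω = s1 ∧ Y0 ω = y0 ∧ Y1 ω = y1} {ω | G ω = g})
    -- Assumption 5 for μ'
    (hA5pos' : ∀ g : Fin m, 0 < μ' {ω | G' ω = g})
    (hA5ov' : ∀ g : Fin m, 0 < condP μ' {ω | A' ω = true} {ω | G' ω = g} ∧
        condP μ' {ω | A' ω = true} {ω | G' ω = g} < 1)
    (hA5ind' : ∀ (g : Fin m) (a s0 s1 y0 y1 : Bool),
      condP μ' {ω | A' ω = a ∧ S0' ω = s0 ∧ S1' ω = s1 ∧ Y0' ω = y0 ∧ Y1' ω = y1}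
          {ω | G' ω = g} =
        condP μ' {ω | A' ω = a} {ω | G' ω = g} *
          condP μ' {ω | S0' ω = s0 ∧ S1' ω = s1 ∧ Y0' ω = y0 ∧ Y1' ω = y1} {ω | G' ω = g})
    -- Assumption 7 for μ
    (hA7 : ∀ (s0 s1 : Bool) (g : Fin m), 0 < μ {ω | S0 ω = s0 ∧ S1 ω = s1 ∧ G ω = g} →
      condP μ {ω | Y1 ω = true} {ω | S0 ω = s0 ∧ S1 ω = s1 ∧ G ω = g} =
        condP μ {ω | Y1 ω = true} {ω | S0 ω = s0 ∧ S1 ω = s1} ∧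
      condP μ {ω | Y0 ω = true} {ω | S0 ω = s0 ∧ S1 ω = s1 ∧ G ω = g} =
        condP μ {ω | Y0 ω = true} {ω | S0 ω = s0 ∧ S1 ω = s1})
    -- Assumption 7 for μ'
    (hA7' : ∀ (s0 s1 : Bool) (g : Fin m), 0 < μ' {ω | S0' ω = s0 ∧ S1' ω = s1 ∧ G' ω = g} →
      condP μ' {ω | Y1' ω = true} {ω | S0' ω = s0 ∧ S1' ω = s1 ∧ G' ω = g} =
        condP μ' {ω | Y1' ω = true} {ω | S0' ω = s0 ∧ S1' ω = s1} ∧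
      condP μ' {ω | Y0' ω = true} {ω | S0' ω = s0 ∧ S1' ω = s1 ∧ G' ω = g} =
        condP μ' {ω | Y0' ω = true} {ω | S0' ω = s0 ∧ S1' ω = s1})
    -- Assumption 8 (monotonicity) for μ and μ'
    (hA8 : μ {ω | S0 ω ≤ S1 ω} = 1)
    (hA8' : μ' {ω | S0' ω ≤ S1' ω} = 1)
    -- Condition 4(ii): columns P(S⁰=0, S¹=1 | G=g) and P(S⁰=0, S¹=0 | G=g)
    (hC4ii : (Matrix.of fun (g : Fin m) (j : Fin 2) =>
      condP μ {ω | S0 ω = false ∧ S1 ω = (j = 0 : Bool)} {ω | G ω = g}).rank = 2)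
    -- equal observed data distributions
    (hobs : ∀ (g : Fin m) (a s y : Bool),
      μ {ω | G ω = g ∧ A ω = a ∧ S ω = s ∧ Y ω = y} =
        μ' {ω | G' ω = g ∧ A' ω = a ∧ S' ω = s ∧ Y' ω = y}) :
    ∀ a b : Bool, (a, b) ≠ (true, false) → ∀ g : Fin m,
      0 < μ {ω | S0 ω = a ∧ S1 ω = b ∧ G ω = g} →
      0 < μ' {ω | S0' ω = a ∧ S1' ω = b ∧ G' ω = g} →
      condP μ {ω | Y0 ω = true} {ω | S0 ω = a ∧ S1 ω = b ∧ G ω = g} =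
        condP μ' {ω | Y0' ω = true} {ω | S0' ω = a ∧ S1' ω = b ∧ G' ω = g} := by
  intro a b hab g hpos hpos'
  have hSY : Measurable fun ω => (S ω, Y ω) :=
    (measurable_of_forall_eq_bif hSdef hAmeas hS1meas hS0meas).prodMk
      (measurable_of_forall_eq_bif hYdef hAmeas hY1meas hY0meas)
  have hSY' : Measurable fun ω => (S' ω, Y' ω) :=
    (measurable_of_forall_eq_bif hS'def hA'meas hS1'meas hS0'meas).prodMk
      (measurable_of_forall_eq_bif hY'def hA'meas hY1'meas hY0'meas)
  have hT (g : Fin m) := isMonotoneRandomizedTrial_cond hGmeas hAmeas hS0meas hS1meas hY0meas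
    hY1meas (hA5pos g) (hA5ov g) (hA5ind g) hA8
  have hT' (g : Fin m) := isMonotoneRandomizedTrial_cond hG'meas hA'meas hS0'meas hS1'meas
    hY0'meas hY1'meas (hA5pos' g) (hA5ov' g) (hA5ind' g) hA8'
  have hlaw := map_potential_cond_eq hT hT' hGmeas hAmeas hS0meas hS1meas hY0meas hY1meas hSY
    hG'meas hA'meas hS0'meas hS1'meas hY0'meas hY1'meas hSY' hSdef hYdef hS'def hY'def hobs
  cases a
  · rw [(hA7 false b g hpos).2, (hA7' false b g hpos').2]
    have hmean := controlStrataMean_eq hC4ii hGmeas hS0meas hS1meas hY0meas hY1meas hG'meas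
      hS0'meas hS1'meas hY0'meas hY1'meas (fun g => (hA5pos g).ne') (fun g => (hA5pos' g).ne')
      (fun c g h => (hA7 false c g h).2) (fun c g h => (hA7' false c g h).2)
      (fun g => (hT g).monotone) (fun g => (hT' g).monotone) (fun g => (hlaw g).1)
      (fun g => (hlaw g).2)
    cases b
    exacts [congrFun hmean 1, congrFun hmean 0]
  · obtain rfl : b = true := by cases b; exacts [absurd rfl hab, rfl]
    rw [setOf_and_and_eq_inter, setOf_and_and_eq_inter,
      ← condP_cond (H := {ω | G ω = g}) (hGmeas (measurableSet_singleton g)) (hA5pos g).ne',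
      ← condP_cond (H := {ω | G' ω = g}) (hG'meas (measurableSet_singleton g)) (hA5pos' g).ne']
    exact condP_stratum_true_true_eq_of_map_eq hS0meas hY0meas hS0'meas hY0'meas (hT g).monotone
      (hT' g).monotone (hlaw g).1

/-- **Theorem 3(b).** Under Assumptions 5, 7, 8 and Condition 4(ii), the control-arm
principal-stratum outcome distribution `P(Y⁰=1 | S⁰=a, S¹=b, G=g)` is identified from the
observed data distribution for all principal strata `(a,b) ∈ {(0,0),(0,1),(1,1)}`. -/
theorem stmt8
    {Ω Ω' : Type*} [MeasurableSpace Ω] [MeasurableSpace Ω']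
    (μ : Measure Ω) (μ' : Measure Ω')
    [IsProbabilityMeasure μ] [IsProbabilityMeasure μ']
    {m : ℕ} (hm : 1 ≤ m)
    (G : Ω → Fin m) (A S0 S1 Y0 Y1 S Y : Ω → Bool)
    (G' : Ω' → Fin m) (A' S0' S1' Y0' Y1' S' Y' : Ω' → Bool)
    (hGmeas : Measurable G) (hAmeas : Measurable A)
    (hS0meas : Measurable S0) (hS1meas : Measurable S1)
    (hY0meas : Measurable Y0) (hY1meas : Measurable Y1)
    (hG'meas : Measurable G') (hA'meas : Measurable A')
    (hS0'meas : Measurable S0') (hS1'meas : Measurable S1')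
    (hY0'meas : Measurable Y0') (hY1'meas : Measurable Y1')
    (hSdef : ∀ ω, S ω = bif A ω then S1 ω else S0 ω)
    (hYdef : ∀ ω, Y ω = bif A ω then Y1 ω else Y0 ω)
    (hS'def : ∀ ω, S' ω = bif A' ω then S1' ω else S0' ω)
    (hY'def : ∀ ω, Y' ω = bif A' ω then Y1' ω else Y0' ω)
    -- Assumption 5 for μ
    (hA5pos : ∀ g : Fin m, 0 < μ {ω | G ω = g})
    (hA5ov : ∀ g : Fin m, 0 < condP μ {ω | A ω = true} {ω | G ω = g} ∧
        condP μ {ω | A ω = true} {ω | G ω = g} < 1)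
    (hA5ind : ∀ (g : Fin m) (a s0 s1 y0 y1 : Bool),
      condP μ {ω | A ω = a ∧ S0 ω = s0 ∧ S1 ω = s1 ∧ Y0 ω = y0 ∧ Y1 ω = y1} {ω | G ω = g} =
        condP μ {ω | A ω = a} {ω | G ω = g} *
          condP μ {ω | S0 ω = s0 ∧ S1 ω = s1 ∧ Y0 ω = y0 ∧ Y1 ω = y1} {ω | G ω = g})
    -- Assumption 5 for μ'
    (hA5pos' : ∀ g : Fin m, 0 < μ' {ω | G' ω = g})
    (hA5ov' : ∀ g : Fin m, 0 < condP μ' {ω | A' ω = true} {ω | G' ω = g} ∧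
        condP μ' {ω | A' ω = true} {ω | G' ω = g} < 1)
    (hA5ind' : ∀ (g : Fin m) (a s0 s1 y0 y1 : Bool),
      condP μ' {ω | A' ω = a ∧ S0' ω = s0 ∧ S1' ω = s1 ∧ Y0' ω = y0 ∧ Y1' ω = y1}
          {ω | G' ω = g} =
        condP μ' {ω | A' ω = a} {ω | G' ω = g} *
          condP μ' {ω | S0' ω = s0 ∧ S1' ω = s1 ∧ Y0' ω = y0 ∧ Y1' ω = y1} {ω | G' ω = g})
    -- Assumption 7 for μ
    (hA7 : ∀ (s0 s1 : Bool) (g : Fin m), 0 < μ {ω | S0 ω = s0 ∧ S1 ω = s1 ∧ G ω = g} →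
      condP μ {ω | Y1 ω = true} {ω | S0 ω = s0 ∧ S1 ω = s1 ∧ G ω = g} =
        condP μ {ω | Y1 ω = true} {ω | S0 ω = s0 ∧ S1 ω = s1} ∧
      condP μ {ω | Y0 ω = true} {ω | S0 ω = s0 ∧ S1 ω = s1 ∧ G ω = g} =
        condP μ {ω | Y0 ω = true} {ω | S0 ω = s0 ∧ S1 ω = s1})
    -- Assumption 7 for μ'
    (hA7' : ∀ (s0 s1 : Bool) (g : Fin m), 0 < μ' {ω | S0' ω = s0 ∧ S1' ω = s1 ∧ G' ω = g} →
      condP μ' {ω | Y1' ω = true} {ω | S0' ω = s0 ∧ S1' ω = s1 ∧ G' ω = g} =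
        condP μ' {ω | Y1' ω = true} {ω | S0' ω = s0 ∧ S1' ω = s1} ∧
      condP μ' {ω | Y0' ω = true} {ω | S0' ω = s0 ∧ S1' ω = s1 ∧ G' ω = g} =
        condP μ' {ω | Y0' ω = true} {ω | S0' ω = s0 ∧ S1' ω = s1})
    -- Assumption 8 (monotonicity) for μ and μ'
    (hA8 : μ {ω | S0 ω ≤ S1 ω} = 1)
    (hA8' : μ' {ω | S0' ω ≤ S1' ω} = 1)
    -- Condition 4(ii): columns P(S⁰=0, S¹=1 | G=g) and P(S⁰=0, S¹=0 | G=g)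
    (hC4ii : (Matrix.of fun (g : Fin m) (j : Fin 2) =>
      condP μ {ω | S0 ω = false ∧ S1 ω = (j = 0 : Bool)} {ω | G ω = g}).rank = 2)
    (hC4ii' : (Matrix.of fun (g : Fin m) (j : Fin 2) =>
      condP μ' {ω | S0' ω = false ∧ S1' ω = (j = 0 : Bool)} {ω | G' ω = g}).rank = 2)
    -- equal observed data distributions
    (hobs : ∀ (g : Fin m) (a s y : Bool),
      μ {ω | G ω = g ∧ A ω = a ∧ S ω = s ∧ Y ω = y} =
        μ' {ω | G' ω = g ∧ A' ω = a ∧ S' ω = s ∧ Y' ω = y}) :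
    ∀ a b : Bool, (a, b) ≠ (true, false) → ∀ g : Fin m,
      0 < μ {ω | S0 ω = a ∧ S1 ω = b ∧ G ω = g} →
      0 < μ' {ω | S0' ω = a ∧ S1' ω = b ∧ G' ω = g} →
      condP μ {ω | Y0 ω = true} {ω | S0 ω = a ∧ S1 ω = b ∧ G ω = g} =
        condP μ' {ω | Y0' ω = true} {ω | S0' ω = a ∧ S1' ω = b ∧ G' ω = g} :=
  stmt8_general μ μ' G A S0 S1 Y0 Y1 S Y G' A' S0' S1' Y0' Y1' S' Y' hGmeas hAmeas hS0meas hS1meas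
    hY0meas hY1meas hG'meas hA'meas hS0'meas hS1'meas hY0'meas hY1'meas hSdef hYdef hS'def hY'def
    hA5pos hA5ov hA5ind hA5pos' hA5ov' hA5ind' hA7 hA7' hA8 hA8' hC4ii hobs
end

section
/- Population least-squares representation of the transition probabilities: Under Assumptions 1 and 2 and Condition 1, let X̃_g := (P(Y=0 | G=g, A=0), P(Y=1 | G=g, A=0)) ∈ ℝ² and Ỹ_g := P(Y=1 | G=g, A=1) for g ∈ Fin m, and let θ := (π₁₍₀₎, π₁₍₁₎) with π₁₍ₐ₎ = P(Y¹=1 | Y⁰=a). Then the 2×2 matrix Σ_g X̃_g X̃_gᵀ is invertible and θ = (Σ_g X̃_g X̃_gᵀ)⁻¹ · Σ_g X̃_g Ỹ_g; moreover, θ is the unique vector in ℝ² satisfying Ỹ_g = X̃_gᵀ θ for all g ∈ Fin m. -/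
open MeasureTheory ProbabilityTheory Matrix

/-!
Within each trial, randomization makes `A` independent of `(Y⁰, Y¹)`, so conditioning on `A = 0`
(resp. `A = 1`) does not change the law of `Y⁰` (resp. `Y¹`): `X̃_g` is the row
`P(Y⁰ = · | G = g)` of the matrix of Condition 1 and `Ỹ_g = P(Y¹ = 1 | G = g)`. Total probability
over `Y⁰` and transportability turn the latter into `∑ₐ P(Y⁰ = a | G = g) π₁₍ₐ₎ = X̃_gᵀ θ`. So `θ`
solves a linear system whose design matrix `X` has full column rank; since `rank (XᵀX) = rank X`,
the Gram matrix `∑_g X̃_g X̃_gᵀ = XᵀX` is invertible and the normal equations determine `θ`.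
-/

namespace Matrix

variable {ι n R : Type*} [Fintype ι]

theorem sum_vecMulVec_eq_transpose_mul [CommSemiring R] (x y : ι → n → R) :
    ∑ g, vecMulVec (x g) (y g) = (of x)ᵀ * of y := by
  ext i j
  simp only [sum_apply, vecMulVec_apply, mul_apply, transpose_apply, of_apply]

variable [Fintype n]

theorem sum_vecMulVec_self_mulVec [CommSemiring R] (x : ι → n → R) (v : n → R) :
    (∑ g, vecMulVec (x g) (x g)) *ᵥ v = ∑ g, (x g ⬝ᵥ v) • x g := by
  rw [sum_vecMulVec_eq_transpose_mul, ← mulVec_mulVec, mulVec_transpose, vecMul_eq_sum]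
  rfl

variable [DecidableEq n]

theorem isUnit_of_rank_eq_card [Field R] {A : Matrix n n R} (h : A.rank = Fintype.card n) :
    IsUnit A := by
  have hrange : LinearMap.range A.mulVecLin = ⊤ := by
    apply Submodule.eq_top_of_finrank_eq
    rw [← rank, h, Module.finrank_fintype_fun_eq_card]
  exact mulVec_surjective_iff_isUnit.mp (LinearMap.range_eq_top.mp hrange)

variable [Field R] [LinearOrder R] [IsStrictOrderedRing R]

theorem isUnit_sum_vecMulVec_self {x : ι → n → R} (hx : (of x).rank = Fintype.card n) :
    IsUnit (∑ g, vecMulVec (x g) (x g)) := by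
  rw [sum_vecMulVec_eq_transpose_mul]
  exact isUnit_of_rank_eq_card (by rw [rank_transpose_mul_self, hx])

theorem eq_of_forall_dotProduct_eq {x : ι → n → R} (hx : (of x).rank = Fintype.card n)
    {θ θ' : n → R} (h : ∀ g, x g ⬝ᵥ θ' = x g ⬝ᵥ θ) : θ' = θ := by
  apply mulVec_injective_iff_isUnit.mpr (isUnit_sum_vecMulVec_self hx)
  simp only [sum_vecMulVec_self_mulVec, h]

theorem eq_inv_mulVec_sum_smul {x : ι → n → R} (hx : (of x).rank = Fintype.card n)
    {y : ι → R} {θ : n → R} (hy : ∀ g, y g = x g ⬝ᵥ θ) :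
    θ = (∑ g, vecMulVec (x g) (x g))⁻¹ *ᵥ ∑ g, y g • x g := by
  have hunit := (isUnit_iff_isUnit_det _).mp (isUnit_sum_vecMulVec_self hx)
  simp only [hy, ← sum_vecMulVec_self_mulVec, mulVec_mulVec, nonsing_inv_mul _ hunit,
    one_mulVec]

end Matrix

section condP

variable {Ω : Type*} [MeasurableSpace Ω] {μ : Measure Ω} [IsFiniteMeasure μ]

-- No positivity hypothesis: if `μ (F ∩ H) = 0`, both sides vanish since `x / 0 = 0`.
theorem condP_inter_eq_mul (E F H : Set Ω) :
    condP μ (E ∩ F) H = condP μ E (F ∩ H) * condP μ F H := by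
  unfold condP
  by_cases hFH : (μ (F ∩ H)).toReal = 0
  · have hnull : μ (F ∩ H) = 0 := (ENNReal.toReal_eq_zero_iff _).mp hFH |>.resolve_right
      (measure_ne_top μ _)
    have : μ (E ∩ F ∩ H) = 0 := measure_mono_null (by grind) hnull
    simp [this, hFH]
  · rw [Set.inter_assoc, div_mul_div_cancel₀ hFH]

theorem condP_eq_sum_bool {f : Ω → Bool} (hf : Measurable f) (E F : Set Ω) :
    condP μ E F = ∑ b, condP μ (E ∩ {ω | f ω = b}) F := by
  have hsplit := measure_inter_add_sdiff (μ := μ) (E ∩ F) (hf (measurableSet_singleton true))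
  have htrue : E ∩ F ∩ f ⁻¹' {true} = E ∩ {ω | f ω = true} ∩ F := by ext; simp; tauto
  have hfalse : (E ∩ F) \ f ⁻¹' {true} = E ∩ {ω | f ω = false} ∩ F := by ext; simp; tauto
  rw [htrue, hfalse] at hsplit
  simp only [condP, Fintype.sum_bool, ← add_div, ← hsplit,
    ENNReal.toReal_add (measure_ne_top μ _) (measure_ne_top μ _)]

theorem condP_compl_pos {E F : Set Ω} (hF : μ F ≠ 0) (h : condP μ E F < 1) :
    0 < condP μ Eᶜ F := by
  have hF' : 0 < (μ F).toReal := ENNReal.toReal_pos hF (measure_ne_top μ _)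
  refine div_pos (ENNReal.toReal_pos (fun hnull => h.not_ge ?_) (measure_ne_top μ _)) hF'
  rw [condP, le_div_iff₀ hF', one_mul]
  refine ENNReal.toReal_mono (measure_ne_top μ _) ?_
  calc μ F ≤ μ (F ∩ E) + μ (F \ E) := measure_le_inter_add_sdiff μ F E
    _ = μ (E ∩ F) := by rw [Set.sdiff_eq, Set.inter_comm F Eᶜ, hnull, add_zero, Set.inter_comm]

theorem condP_inter_eq_mul_of_forall_bool {f : Ω → Bool} (hf : Measurable f) {E E' F : Set Ω}
    {c : ℝ} (h : ∀ b, condP μ (E ∩ (E' ∩ {ω | f ω = b})) F = c * condP μ (E' ∩ {ω | f ω = b}) F) :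
    condP μ (E ∩ E') F = c * condP μ E' F := by
  rw [condP_eq_sum_bool hf (E ∩ E'), condP_eq_sum_bool hf E', Finset.mul_sum]
  exact Finset.sum_congr rfl fun b _ => by rw [Set.inter_assoc, h]

theorem condP_inter_eq_of_indep {D E H : Set Ω} (hD : condP μ D H ≠ 0)
    (hind : condP μ (D ∩ E) H = condP μ D H * condP μ E H) :
    condP μ E (D ∩ H) = condP μ E H := by
  have hchain := condP_inter_eq_mul (μ := μ) E D H
  rw [Set.inter_comm, hind, mul_comm (condP μ E (D ∩ H))] at hchain
  exact (mul_left_cancel₀ hD hchain).symm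

end condP

theorem vec_false_true_eq_comp_finTwoEquiv {α : Type*} (f : Bool → α) :
    ![f false, f true] = f ∘ finTwoEquiv := by
  funext i
  fin_cases i <;> rfl

section PotentialOutcomes

variable {Ω : Type*} [MeasurableSpace Ω] {μ : Measure Ω} [IsFiniteMeasure μ]
  {m : ℕ} {G : Ω → Fin m} {A Y0 Y1 Y : Ω → Bool}

variable (μ G A Y0 Y1) in
def TreatmentCondIndepOutcomes : Prop :=
  ∀ (g : Fin m) (a y0 y1 : Bool),
    condP μ {ω | A ω = a ∧ Y0 ω = y0 ∧ Y1 ω = y1} {ω | G ω = g} =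
      condP μ {ω | A ω = a} {ω | G ω = g} * condP μ {ω | Y0 ω = y0 ∧ Y1 ω = y1} {ω | G ω = g}

-- `cond b Y1 Y0` is the potential outcome `Yᵇ`.
theorem condP_treatment_inter_potential (hY0 : Measurable Y0) (hY1 : Measurable Y1)
    (hind : TreatmentCondIndepOutcomes μ G A Y0 Y1)
    (g : Fin m) (a b y : Bool) :
    condP μ ({ω | A ω = a} ∩ {ω | cond b Y1 Y0 ω = y}) {ω | G ω = g} =
      condP μ {ω | A ω = a} {ω | G ω = g} * condP μ {ω | cond b Y1 Y0 ω = y} {ω | G ω = g} := by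
  cases b
  · exact condP_inter_eq_mul_of_forall_bool hY1 fun y1 => hind g a y y1
  · refine condP_inter_eq_mul_of_forall_bool hY0 fun y0 => ?_
    simp only [cond_true, Set.inter_comm {ω | Y1 ω = y}]
    exact hind g a y0 y

theorem condP_observed_eq_potential (hYdef : ∀ ω, Y ω = bif A ω then Y1 ω else Y0 ω)
    (hY0 : Measurable Y0) (hY1 : Measurable Y1)
    (hind : TreatmentCondIndepOutcomes μ G A Y0 Y1)
    {g : Fin m} {a : Bool} (ha : condP μ {ω | A ω = a} {ω | G ω = g} ≠ 0) (y : Bool) :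
    condP μ {ω | Y ω = y} {ω | G ω = g ∧ A ω = a} =
      condP μ {ω | cond a Y1 Y0 ω = y} {ω | G ω = g} := by
  have hconsistent : {ω | Y ω = y} ∩ ({ω | A ω = a} ∩ {ω | G ω = g}) =
      {ω | cond a Y1 Y0 ω = y} ∩ ({ω | A ω = a} ∩ {ω | G ω = g}) := by
    ext ω
    simp only [Set.mem_inter_iff, Set.mem_ofPred_eq, and_congr_left_iff]
    rintro ⟨rfl, -⟩
    rw [hYdef]
    cases A ω <;> rfl
  calc condP μ {ω | Y ω = y} {ω | G ω = g ∧ A ω = a}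
      = condP μ {ω | cond a Y1 Y0 ω = y} ({ω | A ω = a} ∩ {ω | G ω = g}) := by
        rw [Set.ofPred_and, Set.inter_comm, condP, hconsistent, condP]
    _ = condP μ {ω | cond a Y1 Y0 ω = y} {ω | G ω = g} :=
        condP_inter_eq_of_indep ha (condP_treatment_inter_potential hY0 hY1 hind g a a y)

theorem condP_treated_eq_sum_transition (hY0 : Measurable Y0)
    (htransport : ∀ (a b : Bool) (g : Fin m), 0 < μ {ω | Y0 ω = a ∧ G ω = g} →
      condP μ {ω | Y1 ω = b} {ω | Y0 ω = a ∧ G ω = g} = condP μ {ω | Y1 ω = b} {ω | Y0 ω = a})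
    (g : Fin m) (b : Bool) :
    condP μ {ω | Y1 ω = b} {ω | G ω = g} =
      ∑ a, condP μ {ω | Y1 ω = b} {ω | Y0 ω = a} * condP μ {ω | Y0 ω = a} {ω | G ω = g} := by
  rw [condP_eq_sum_bool hY0]
  refine Finset.sum_congr rfl fun a _ => ?_
  rw [condP_inter_eq_mul]
  by_cases hnull : μ ({ω | Y0 ω = a} ∩ {ω | G ω = g}) = 0
  · simp [condP, hnull]
  · exact congrArg (· * _) (htransport a b g (pos_iff_ne_zero.mpr hnull))

end PotentialOutcomes

theorem stmt13_general
    {Ω : Type*} [MeasurableSpace Ω] (μ : Measure Ω) [IsProbabilityMeasure μ]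
    {m : ℕ}
    (G : Ω → Fin m) (A Y0 Y1 Y : Ω → Bool)
    (hY0meas : Measurable Y0) (hY1meas : Measurable Y1)
    (hYdef : ∀ ω, Y ω = bif A ω then Y1 ω else Y0 ω)
    -- Assumption 1
    (hA1pos : ∀ g : Fin m, 0 < μ {ω | G ω = g})
    (hA1ov : ∀ g : Fin m, 0 < condP μ {ω | A ω = true} {ω | G ω = g} ∧
        condP μ {ω | A ω = true} {ω | G ω = g} < 1)
    (hA1ind : ∀ (g : Fin m) (a y0 y1 : Bool),
      condP μ {ω | A ω = a ∧ Y0 ω = y0 ∧ Y1 ω = y1} {ω | G ω = g} =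
        condP μ {ω | A ω = a} {ω | G ω = g} *
          condP μ {ω | Y0 ω = y0 ∧ Y1 ω = y1} {ω | G ω = g})
    -- Assumption 2
    (hA2 : ∀ (a b : Bool) (g : Fin m), 0 < μ {ω | Y0 ω = a ∧ G ω = g} →
      condP μ {ω | Y1 ω = b} {ω | Y0 ω = a ∧ G ω = g} =
        condP μ {ω | Y1 ω = b} {ω | Y0 ω = a})
    -- Condition 1
    (hC1 : (Matrix.of fun (g : Fin m) (a : Bool) =>
      condP μ {ω | Y0 ω = a} {ω | G ω = g}).rank = 2)
    -- the population quantities X̃_g, Ỹ_g and the parameter θ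
    (Xt : Fin m → Fin 2 → ℝ)
    (hXt : ∀ g : Fin m, Xt g =
      ![condP μ {ω | Y ω = false} {ω | G ω = g ∧ A ω = false},
        condP μ {ω | Y ω = true} {ω | G ω = g ∧ A ω = false}])
    (Yt : Fin m → ℝ)
    (hYt : ∀ g : Fin m, Yt g = condP μ {ω | Y ω = true} {ω | G ω = g ∧ A ω = true})
    (θ : Fin 2 → ℝ)
    (hθ : θ = ![condP μ {ω | Y1 ω = true} {ω | Y0 ω = false},
                condP μ {ω | Y1 ω = true} {ω | Y0 ω = true}]) :
    IsUnit (∑ g : Fin m, vecMulVec (Xt g) (Xt g)) ∧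
    θ = (∑ g : Fin m, vecMulVec (Xt g) (Xt g))⁻¹ *ᵥ (∑ g : Fin m, Yt g • Xt g) ∧
    (∀ θ' : Fin 2 → ℝ, (∀ g : Fin m, Yt g = Xt g ⬝ᵥ θ') → θ' = θ) := by
  have hcontrol : ∀ g, condP μ {ω | A ω = false} {ω | G ω = g} ≠ 0 := fun g => by
    have hcompl : {ω | A ω = false} = {ω | A ω = true}ᶜ := by ext; simp
    exact hcompl ▸ (condP_compl_pos (hA1pos g).ne' (hA1ov g).2).ne'
  have hX : ∀ g, Xt g = (fun a => condP μ {ω | Y0 ω = a} {ω | G ω = g}) ∘ finTwoEquiv := by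
    intro g
    simp only [hXt, condP_observed_eq_potential hYdef hY0meas hY1meas hA1ind (hcontrol g),
      cond_false]
    exact vec_false_true_eq_comp_finTwoEquiv fun a => condP μ {ω | Y0 ω = a} {ω | G ω = g}
  have hrank : (of Xt).rank = Fintype.card (Fin 2) := by
    have hsub : of Xt = (of fun g a => condP μ {ω | Y0 ω = a} {ω | G ω = g}).submatrix
        (Equiv.refl _) finTwoEquiv := Matrix.ext fun g i => by rw [of_apply, hX]; rfl
    rw [hsub, rank_submatrix, hC1, Fintype.card_fin]
  have hY : ∀ g, Yt g = Xt g ⬝ᵥ θ := by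
    intro g
    rw [hYt, condP_observed_eq_potential hYdef hY0meas hY1meas hA1ind (hA1ov g).1.ne',
      cond_true, condP_treated_eq_sum_transition hY0meas hA2, hX, hθ,
      vec_false_true_eq_comp_finTwoEquiv (fun a => condP μ {ω | Y1 ω = true} {ω | Y0 ω = a}),
      dotProduct, ← Equiv.sum_comp finTwoEquiv]
    exact Finset.sum_congr rfl fun i _ => mul_comm _ _
  exact ⟨isUnit_sum_vecMulVec_self hrank, eq_inv_mulVec_sum_smul hrank hY,
    fun θ' hθ' => eq_of_forall_dotProduct_eq hrank fun g => (hθ' g).symm.trans (hY g)⟩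

/-- **Population least-squares representation of the transition probabilities.**
Under Assumptions 1, 2 and Condition 1, the `2 × 2` matrix `Σ_g X̃_g X̃_gᵀ` is invertible,
`θ = (Σ_g X̃_g X̃_gᵀ)⁻¹ · Σ_g X̃_g Ỹ_g`, and `θ` is the unique vector satisfying
`Ỹ_g = X̃_gᵀ θ` for all `g`. -/
theorem stmt13
    {Ω : Type*} [MeasurableSpace Ω] (μ : Measure Ω) [IsProbabilityMeasure μ]
    {m : ℕ} (hm : 1 ≤ m)
    (G : Ω → Fin m) (A Y0 Y1 Y : Ω → Bool)
    (hGmeas : Measurable G) (hAmeas : Measurable A)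
    (hY0meas : Measurable Y0) (hY1meas : Measurable Y1)
    (hYdef : ∀ ω, Y ω = bif A ω then Y1 ω else Y0 ω)
    -- Assumption 1
    (hA1pos : ∀ g : Fin m, 0 < μ {ω | G ω = g})
    (hA1ov : ∀ g : Fin m, 0 < condP μ {ω | A ω = true} {ω | G ω = g} ∧
        condP μ {ω | A ω = true} {ω | G ω = g} < 1)
    (hA1ind : ∀ (g : Fin m) (a y0 y1 : Bool),
      condP μ {ω | A ω = a ∧ Y0 ω = y0 ∧ Y1 ω = y1} {ω | G ω = g} =
        condP μ {ω | A ω = a} {ω | G ω = g} *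
          condP μ {ω | Y0 ω = y0 ∧ Y1 ω = y1} {ω | G ω = g})
    -- Assumption 2
    (hA2pos : ∀ a : Bool, 0 < μ {ω | Y0 ω = a})
    (hA2 : ∀ (a b : Bool) (g : Fin m), 0 < μ {ω | Y0 ω = a ∧ G ω = g} →
      condP μ {ω | Y1 ω = b} {ω | Y0 ω = a ∧ G ω = g} =
        condP μ {ω | Y1 ω = b} {ω | Y0 ω = a})
    -- Condition 1
    (hC1 : (Matrix.of fun (g : Fin m) (a : Bool) =>
      condP μ {ω | Y0 ω = a} {ω | G ω = g}).rank = 2)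
    -- the population quantities X̃_g, Ỹ_g and the parameter θ
    (Xt : Fin m → Fin 2 → ℝ)
    (hXt : ∀ g : Fin m, Xt g =
      ![condP μ {ω | Y ω = false} {ω | G ω = g ∧ A ω = false},
        condP μ {ω | Y ω = true} {ω | G ω = g ∧ A ω = false}])
    (Yt : Fin m → ℝ)
    (hYt : ∀ g : Fin m, Yt g = condP μ {ω | Y ω = true} {ω | G ω = g ∧ A ω = true})
    (θ : Fin 2 → ℝ)
    (hθ : θ = ![condP μ {ω | Y1 ω = true} {ω | Y0 ω = false},
                condP μ {ω | Y1 ω = true} {ω | Y0 ω = true}]) :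
    IsUnit (∑ g : Fin m, vecMulVec (Xt g) (Xt g)) ∧
    θ = (∑ g : Fin m, vecMulVec (Xt g) (Xt g))⁻¹ *ᵥ (∑ g : Fin m, Yt g • Xt g) ∧
    (∀ θ' : Fin 2 → ℝ, (∀ g : Fin m, Yt g = Xt g ⬝ᵥ θ') → θ' = θ) :=
  stmt13_general μ G A Y0 Y1 Y hY0meas hY1meas hYdef hA1pos hA1ov hA1ind hA2 hC1 Xt hXt Yt hYt θ hθ
end
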